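/- Let G, Ĝ be real p×n matrices, Σ_η a real symmetric positive definite p×p matrix, Σ_ω a real symmetric positive definite n×n matrix, α ∈ (0,1], and y ∈ ℝᵖ. Let C, Ĉ be real symmetric positive definite n×n matrices satisfying C⁻¹ = Gᵀ Σ_η⁻¹ G + (α² C + Σ_ω)⁻¹ and Ĉ⁻¹ = Ĝᵀ Σ_η⁻¹ Ĝ + (α² Ĉ + Σ_ω)⁻¹, and let r, r̂ ∈ ℝⁿ satisfy C⁻¹ r = Gᵀ Σ_η⁻¹ y + α (α² C + Σ_ω)⁻¹ r and Ĉ⁻¹ r̂ = Ĝᵀ Σ_η⁻¹ y + α (α² Ĉ + Σ_ω)⁻¹ r̂. Assume: (i) Gᵀ Σ_η⁻¹ G and Ĝᵀ Σ_η⁻¹ Ĝ are positive definite; (ii) ‖G − Ĝ‖₂ ≤ ε, ‖G‖₂ ≤ H, ‖Ĝ‖₂ ≤ H for constants ε, H > 0; (iii) ‖Gᵀ Σ_η⁻¹ G‖₂ ≥ C₁ > 0 and ‖Ĝᵀ Σ_η⁻¹ Ĝ‖₂ ≥ C₂ > 0; (iv) there exists β ∈ [0,1) with ‖(α² C + Σ_ω)⁻¹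 − (α² Ĉ + Σ_ω)⁻¹‖₂ ≤ β ‖C⁻¹ − Ĉ⁻¹‖₂; (v) the condition-number bounds ‖(Gᵀ Σ_η⁻¹ G)⁻¹‖₂ · ‖Gᵀ Σ_η⁻¹ G‖₂ ≤ K₁ and ‖(Ĝᵀ Σ_η⁻¹ Ĝ)⁻¹‖₂ · ‖Ĝᵀ Σ_η⁻¹ Ĝ‖₂ ≤ K₂ hold. Then, with H_η := ‖Σ_η⁻¹‖₂ and H_y := ‖y‖₂, it holds that ‖r − r̂‖₂ ≤ (K₁ H_η H_y / C₁) · ( 1 + 2 (1 + α β) K₂ H_η H² / ((1 − β) C₂) ) · ε. -/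

import Mathlib

open Matrix

/-- The spectral norm of a real matrix: the operator norm induced by the
Euclidean norms on the domain and codomain. -/
noncomputable def specNorm {m n : ℕ} (A : Matrix (Fin m) (Fin n) ℝ) : ℝ :=
  ‖LinearMap.toContinuousLinearMap (Matrix.toEuclideanLin A)‖

/-- The Euclidean norm of a real vector. -/
noncomputable def eucNorm {n : ℕ} (v : Fin n → ℝ) : ℝ :=
  ‖(EuclideanSpace.equiv (Fin n) ℝ).symm v‖

/-! Eliminating `C⁻¹ = A + B` (with `A = GᵀΣ_η⁻¹G`, `B = (α²C + Σ_ω)⁻¹`) from the mean equation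
turns it into the linear system `(A + (1 - α)B) r = GᵀΣ_η⁻¹y`, and likewise for `r̂`. As `B` is
positive definite, `‖(A + (1 - α)B)⁻¹‖ ≤ ‖A⁻¹‖ ≤ K₁ / C₁`, so `r - r̂` is controlled by the
perturbations of the right-hand side and of the system matrix. The former is at most
`ε ‖Σ_η⁻¹‖ ‖y‖`; for the latter, the contraction hypothesis gives
`(1 - β) ‖C⁻¹ - Ĉ⁻¹‖ ≤ ‖A - Â‖ ≤ 2 H ‖Σ_η⁻¹‖ ε`. -/

open scoped Matrix.Norms.L2Operator

section Norms

variable {m n l : ℕ}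

lemma specNorm_eq_norm (A : Matrix (Fin m) (Fin n) ℝ) : specNorm A = ‖A‖ := rfl

lemma specNorm_nonneg (A : Matrix (Fin m) (Fin n) ℝ) : 0 ≤ specNorm A := norm_nonneg _

lemma specNorm_mul_le (A : Matrix (Fin m) (Fin n) ℝ) (B : Matrix (Fin n) (Fin l) ℝ) :
    specNorm (A * B) ≤ specNorm A * specNorm B :=
  l2_opNorm_mul A B

lemma specNorm_add_le (A B : Matrix (Fin m) (Fin n) ℝ) :
    specNorm (A + B) ≤ specNorm A + specNorm B :=
  norm_add_le A B

lemma specNorm_sub_rev (A B : Matrix (Fin m) (Fin n) ℝ) :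
    specNorm (A - B) = specNorm (B - A) :=
  norm_sub_rev A B

lemma specNorm_smul (c : ℝ) (A : Matrix (Fin m) (Fin n) ℝ) :
    specNorm (c • A) = |c| * specNorm A := by
  rw [specNorm_eq_norm, norm_smul, Real.norm_eq_abs, specNorm_eq_norm]

lemma specNorm_transpose (A : Matrix (Fin m) (Fin n) ℝ) : specNorm Aᵀ = specNorm A := by
  rw [← conjTranspose_eq_transpose_of_trivial]
  exact l2_opNorm_conjTranspose A

lemma specNorm_transpose_mul_self (A : Matrix (Fin m) (Fin n) ℝ) :
    specNorm (Aᵀ * A) = specNorm A ^ 2 := by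
  rw [← conjTranspose_eq_transpose_of_trivial, sq]
  exact l2_opNorm_conjTranspose_mul_self A

lemma specNorm_le_of_forall (A : Matrix (Fin m) (Fin n) ℝ) {c : ℝ} (hc : 0 ≤ c)
    (h : ∀ v, eucNorm (A *ᵥ v) ≤ c * eucNorm v) : specNorm A ≤ c :=
  ContinuousLinearMap.opNorm_le_bound _ hc fun x => h x

lemma eucNorm_nonneg (v : Fin n → ℝ) : 0 ≤ eucNorm v := norm_nonneg _

lemma eucNorm_add_le (u v : Fin n → ℝ) : eucNorm (u + v) ≤ eucNorm u + eucNorm v := by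
  rw [eucNorm, map_add]
  exact norm_add_le _ _

lemma eucNorm_mulVec_le (A : Matrix (Fin m) (Fin n) ℝ) (v : Fin n → ℝ) :
    eucNorm (A *ᵥ v) ≤ specNorm A * eucNorm v :=
  l2_opNorm_mulVec A _

lemma eucNorm_sq (v : Fin n → ℝ) : eucNorm v ^ 2 = v ⬝ᵥ v := by
  rw [eucNorm, ← real_inner_self_eq_norm_sq, EuclideanSpace.inner_eq_star_dotProduct]
  simp

lemma dotProduct_le_eucNorm_mul (u v : Fin n → ℝ) : u ⬝ᵥ v ≤ eucNorm u * eucNorm v := by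
  have h := real_inner_le_norm ((EuclideanSpace.equiv (Fin n) ℝ).symm u)
    ((EuclideanSpace.equiv (Fin n) ℝ).symm v)
  rw [EuclideanSpace.inner_eq_star_dotProduct] at h
  simpa [eucNorm, dotProduct_comm] using h

lemma eucNorm_le_of_mulVec_eq {M : Matrix (Fin n) (Fin n) ℝ} (hM : IsUnit M)
    {x b : Fin n → ℝ} (h : M *ᵥ x = b) : eucNorm x ≤ specNorm M⁻¹ * eucNorm b := by
  have hx : x = M⁻¹ *ᵥ b := by
    rw [← h, mulVec_mulVec, nonsing_inv_mul M ((isUnit_iff_isUnit_det M).mp hM), one_mulVec]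
  exact hx ▸ eucNorm_mulVec_le M⁻¹ b

end Norms

section PosDef

variable {n : ℕ}

open scoped MatrixOrder in
lemma Matrix.PosDef.eucNorm_sq_le {A : Matrix (Fin n) (Fin n) ℝ} (hA : A.PosDef)
    (v : Fin n → ℝ) : eucNorm v ^ 2 ≤ specNorm A⁻¹ * (v ⬝ᵥ A *ᵥ v) := by
  set R := CFC.sqrt A
  have hRR : Rᵀ * R = A := by
    rw [← conjTranspose_eq_transpose_of_trivial, (CFC.sqrt_nonneg A).posSemidef.1.eq]
    exact CFC.sqrt_mul_sqrt_self A hA.posSemidef.nonneg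
  have hR : IsUnit R := by
    have h : IsUnit (Rᵀ * R).det := hRR ▸ (isUnit_iff_isUnit_det A).mp hA.isUnit
    rw [det_mul, det_transpose] at h
    exact (isUnit_iff_isUnit_det R).mpr (isUnit_of_mul_isUnit_right h)
  have hquad : v ⬝ᵥ A *ᵥ v = eucNorm (R *ᵥ v) ^ 2 := by
    rw [eucNorm_sq, ← hRR, ← mulVec_mulVec, dotProduct_mulVec, vecMul_transpose]
  have hnorm_inv : specNorm A⁻¹ = specNorm R⁻¹ ^ 2 := by
    rw [← hRR, mul_inv_rev, ← transpose_nonsing_inv, ← specNorm_transpose R⁻¹,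
      ← specNorm_transpose_mul_self, transpose_transpose]
  rw [hquad, hnorm_inv, ← mul_pow]
  exact pow_le_pow_left₀ (eucNorm_nonneg v) (eucNorm_le_of_mulVec_eq hR rfl) 2

lemma specNorm_inv_le_of_eucNorm_sq_le {M : Matrix (Fin n) (Fin n) ℝ} (hM : IsUnit M)
    {c : ℝ} (hc : 0 ≤ c) (h : ∀ v, eucNorm v ^ 2 ≤ c * (v ⬝ᵥ M *ᵥ v)) :
    specNorm M⁻¹ ≤ c := by
  refine specNorm_le_of_forall _ hc fun x => ?_
  set v := M⁻¹ *ᵥ x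
  have hv : M *ᵥ v = x := by
    rw [mulVec_mulVec, mul_nonsing_inv M ((isUnit_iff_isUnit_det M).mp hM), one_mulVec]
  have key : eucNorm v ^ 2 ≤ eucNorm v * (c * eucNorm x) :=
    calc eucNorm v ^ 2 ≤ c * (v ⬝ᵥ x) := hv ▸ h v
      _ ≤ c * (eucNorm v * eucNorm x) := by gcongr; exact dotProduct_le_eucNorm_mul v x
      _ = eucNorm v * (c * eucNorm x) := by ring
  nlinarith [eucNorm_nonneg v, mul_nonneg hc (eucNorm_nonneg x)]

lemma Matrix.PosDef.specNorm_inv_add_le {A S : Matrix (Fin n) (Fin n) ℝ} (hA : A.PosDef)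
    (hS : S.PosSemidef) : specNorm (A + S)⁻¹ ≤ specNorm A⁻¹ := by
  refine specNorm_inv_le_of_eucNorm_sq_le (hA.add_posSemidef hS).isUnit (specNorm_nonneg _)
    fun v => (hA.eucNorm_sq_le v).trans ?_
  gcongr
  · exact specNorm_nonneg _
  · rw [add_mulVec, dotProduct_add, le_add_iff_nonneg_right]
    simpa using hS.dotProduct_mulVec_nonneg v

lemma specNorm_inv_le_div {A : Matrix (Fin n) (Fin n) ℝ} {K c : ℝ}
    (hK : specNorm A⁻¹ * specNorm A ≤ K) (hc : 0 < c) (hlow : c ≤ specNorm A) :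
    specNorm A⁻¹ ≤ K / c := by
  rw [le_div_iff₀ hc]
  exact (mul_le_mul_of_nonneg_left hlow (specNorm_nonneg _)).trans hK

end PosDef

section Perturbation

variable {n : ℕ}

lemma mulVec_eq_of_fixedPoint {R ι : Type*} [CommRing R] [Fintype ι]
    {A B P : Matrix ι ι R} {b r : ι → R} {α : R}
    (hP : P = A + B) (hr : P *ᵥ r = b + α • (B *ᵥ r)) : (A + (1 - α) • B) *ᵥ r = b := by
  rw [hP, add_mulVec] at hr
  rw [add_mulVec, smul_mulVec, sub_smul, one_smul]
  linear_combination hr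

lemma eucNorm_sub_le_of_mulVec_eq {M Mhat : Matrix (Fin n) (Fin n) ℝ}
    (hM : IsUnit M) (hMhat : IsUnit Mhat) {r rhat b bhat : Fin n → ℝ}
    (hr : M *ᵥ r = b) (hrhat : Mhat *ᵥ rhat = bhat) {a ahat δ h D : ℝ}
    (ha : specNorm M⁻¹ ≤ a) (hahat : specNorm Mhat⁻¹ ≤ ahat)
    (hδ : eucNorm (b - bhat) ≤ δ) (hh : eucNorm bhat ≤ h) (hD : specNorm (Mhat - M) ≤ D) :
    eucNorm (r - rhat) ≤ a * (δ + D * (ahat * h)) := by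
  have hdiff : M *ᵥ (r - rhat) = (b - bhat) + (Mhat - M) *ᵥ rhat := by
    rw [mulVec_sub, sub_mulVec, hr, hrhat]
    abel
  have hrhat_le : eucNorm rhat ≤ ahat * h :=
    (eucNorm_le_of_mulVec_eq hMhat hrhat).trans
      (mul_le_mul hahat hh (eucNorm_nonneg _) ((specNorm_nonneg _).trans hahat))
  have hrhs : eucNorm ((b - bhat) + (Mhat - M) *ᵥ rhat) ≤ δ + D * (ahat * h) :=
    (eucNorm_add_le _ _).trans <| add_le_add hδ <| (eucNorm_mulVec_le _ _).trans <|
      mul_le_mul hD hrhat_le (eucNorm_nonneg _) ((specNorm_nonneg _).trans hD)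
  exact (eucNorm_le_of_mulVec_eq hM hdiff).trans
    (mul_le_mul ha hrhs (eucNorm_nonneg _) ((specNorm_nonneg _).trans ha))

end Perturbation

section Gram

variable {p n : ℕ}

lemma specNorm_transpose_mul_le (G : Matrix (Fin p) (Fin n) ℝ) (S : Matrix (Fin p) (Fin p) ℝ) :
    specNorm (Gᵀ * S) ≤ specNorm G * specNorm S :=
  (specNorm_mul_le _ _).trans_eq (by rw [specNorm_transpose])

lemma eucNorm_transpose_mul_mulVec_le (G : Matrix (Fin p) (Fin n) ℝ)
    (S : Matrix (Fin p) (Fin p) ℝ) (y : Fin p → ℝ) :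
    eucNorm ((Gᵀ * S) *ᵥ y) ≤ specNorm G * specNorm S * eucNorm y :=
  (eucNorm_mulVec_le _ _).trans
    (mul_le_mul_of_nonneg_right (specNorm_transpose_mul_le _ _) (eucNorm_nonneg y))

lemma eucNorm_sub_transpose_mul_mulVec_le (G Ghat : Matrix (Fin p) (Fin n) ℝ)
    (S : Matrix (Fin p) (Fin p) ℝ) (y : Fin p → ℝ) :
    eucNorm ((Gᵀ * S) *ᵥ y - (Ghatᵀ * S) *ᵥ y) ≤ specNorm (G - Ghat) * specNorm S * eucNorm y := by
  rw [← sub_mulVec, ← Matrix.sub_mul, ← transpose_sub]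
  exact eucNorm_transpose_mul_mulVec_le _ S y

lemma specNorm_gram_sub_le (G Ghat : Matrix (Fin p) (Fin n) ℝ) (S : Matrix (Fin p) (Fin p) ℝ) :
    specNorm (Gᵀ * S * G - Ghatᵀ * S * Ghat) ≤
      specNorm (G - Ghat) * specNorm S * (specNorm G + specNorm Ghat) := by
  have hsplit : Gᵀ * S * G - Ghatᵀ * S * Ghat =
      (G - Ghat)ᵀ * S * G + Ghatᵀ * S * (G - Ghat) := by
    simp only [transpose_sub, Matrix.sub_mul, Matrix.mul_sub]
    abel
  have hprod (X Y : Matrix (Fin p) (Fin n) ℝ) :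
      specNorm (Xᵀ * S * Y) ≤ specNorm X * specNorm S * specNorm Y :=
    (specNorm_mul_le _ _).trans
      (mul_le_mul_of_nonneg_right (specNorm_transpose_mul_le _ _) (specNorm_nonneg Y))
  rw [hsplit]
  refine (specNorm_add_le _ _).trans ?_
  linarith [hprod (G - Ghat) G, hprod Ghat (G - Ghat)]

end Gram

section Contraction

variable {n : ℕ} {P Phat A Ahat B Bhat : Matrix (Fin n) (Fin n) ℝ} {β : ℝ}

lemma specNorm_sub_mul_one_sub_le (hP : P = A + B) (hPhat : Phat = Ahat + Bhat)
    (hcontr : specNorm (B - Bhat) ≤ β * specNorm (P - Phat)) :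
    specNorm (P - Phat) * (1 - β) ≤ specNorm (A - Ahat) := by
  have h : specNorm (P - Phat) ≤ specNorm (A - Ahat) + specNorm (B - Bhat) := by
    rw [hP, hPhat, add_sub_add_comm]
    exact specNorm_add_le _ _
  linarith

lemma specNorm_sub_le_of_contraction {α : ℝ} (hα1 : α ≤ 1) (hβ0 : 0 ≤ β) (hβ1 : β < 1)
    (hP : P = A + B) (hPhat : Phat = Ahat + Bhat)
    (hcontr : specNorm (B - Bhat) ≤ β * specNorm (P - Phat)) :
    specNorm ((Ahat + (1 - α) • Bhat) - (A + (1 - α) • B)) ≤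
      (1 - α * β) / (1 - β) * specNorm (A - Ahat) := by
  have hP_le := specNorm_sub_mul_one_sub_le hP hPhat hcontr
  have h : specNorm ((Ahat + (1 - α) • Bhat) - (A + (1 - α) • B)) ≤
      specNorm (A - Ahat) + (1 - α) * (β * specNorm (P - Phat)) := by
    rw [add_sub_add_comm, ← smul_sub]
    refine (specNorm_add_le _ _).trans ?_
    rw [specNorm_smul, abs_of_nonneg (by linarith), specNorm_sub_rev Ahat, specNorm_sub_rev Bhat]
    gcongr
  rw [div_mul_eq_mul_div, le_div_iff₀ (by linarith)]
  nlinarith [mul_le_mul_of_nonneg_left hP_le (mul_nonneg (sub_nonneg.2 hα1) hβ0)]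

end Contraction

lemma Matrix.PosDef.posSemidef_smul_inv_smul_add {n : ℕ} {C S : Matrix (Fin n) (Fin n) ℝ}
    (hC : C.PosDef) (hS : S.PosDef) {a c : ℝ} (ha : 0 < a) (hc : 0 ≤ c) :
    (c • (a • C + S)⁻¹).PosSemidef :=
  ((hC.smul ha).add hS).inv.posSemidef.smul hc

theorem stmt_12_general {p n : ℕ} (G Ghat : Matrix (Fin p) (Fin n) ℝ)
    (Sη : Matrix (Fin p) (Fin p) ℝ)
    (Sω : Matrix (Fin n) (Fin n) ℝ) (hSω : Sω.PosDef)
    (α : ℝ) (hα0 : 0 < α) (hα1 : α ≤ 1) (y : Fin p → ℝ)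
    (C Chat : Matrix (Fin n) (Fin n) ℝ) (hC : C.PosDef) (hChat : Chat.PosDef)
    (hfixC : C⁻¹ = Gᵀ * Sη⁻¹ * G + (α ^ 2 • C + Sω)⁻¹)
    (hfixChat : Chat⁻¹ = Ghatᵀ * Sη⁻¹ * Ghat + (α ^ 2 • Chat + Sω)⁻¹)
    (r rhat : Fin n → ℝ)
    (hr : C⁻¹ *ᵥ r = (Gᵀ * Sη⁻¹) *ᵥ y + α • ((α ^ 2 • C + Sω)⁻¹ *ᵥ r))
    (hrhat : Chat⁻¹ *ᵥ rhat =
      (Ghatᵀ * Sη⁻¹) *ᵥ y + α • ((α ^ 2 • Chat + Sω)⁻¹ *ᵥ rhat))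
    (hGPD : (Gᵀ * Sη⁻¹ * G).PosDef) (hGhatPD : (Ghatᵀ * Sη⁻¹ * Ghat).PosDef)
    (ε H : ℝ)
    (hGG : specNorm (G - Ghat) ≤ ε)
    (hG : specNorm G ≤ H) (hGhat : specNorm Ghat ≤ H)
    (C₁ C₂ : ℝ) (hC₁ : 0 < C₁) (hC₂ : 0 < C₂)
    (hlow : C₁ ≤ specNorm (Gᵀ * Sη⁻¹ * G))
    (hlowhat : C₂ ≤ specNorm (Ghatᵀ * Sη⁻¹ * Ghat))
    (β : ℝ) (hβ0 : 0 ≤ β) (hβ1 : β < 1)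
    (hcontr : specNorm ((α ^ 2 • C + Sω)⁻¹ - (α ^ 2 • Chat + Sω)⁻¹) ≤
      β * specNorm (C⁻¹ - Chat⁻¹))
    (K₁ K₂ : ℝ)
    (hK₁ : specNorm (Gᵀ * Sη⁻¹ * G)⁻¹ * specNorm (Gᵀ * Sη⁻¹ * G) ≤ K₁)
    (hK₂ : specNorm (Ghatᵀ * Sη⁻¹ * Ghat)⁻¹ * specNorm (Ghatᵀ * Sη⁻¹ * Ghat) ≤ K₂) :
    eucNorm (r - rhat) ≤
      K₁ * specNorm Sη⁻¹ * eucNorm y / C₁ *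
        (1 + 2 * (1 + α * β) * K₂ * specNorm Sη⁻¹ * H ^ 2 / ((1 - β) * C₂)) * ε := by
  have hα : 0 ≤ 1 - α := sub_nonneg.2 hα1
  have hB := hC.posSemidef_smul_inv_smul_add hSω (pow_pos hα0 2) hα
  have hBhat := hChat.posSemidef_smul_inv_smul_add hSω (pow_pos hα0 2) hα
  have hβ : 0 < 1 - β := sub_pos.2 hβ1
  have hη := specNorm_nonneg Sη⁻¹
  have hy := eucNorm_nonneg y
  have hH : 0 ≤ H := (specNorm_nonneg G).trans hG
  have hε : 0 ≤ ε := (specNorm_nonneg _).trans hGG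
  have hgram : specNorm (Gᵀ * Sη⁻¹ * G - Ghatᵀ * Sη⁻¹ * Ghat) ≤ ε * specNorm Sη⁻¹ * (H + H) :=
    (specNorm_gram_sub_le G Ghat Sη⁻¹).trans <| mul_le_mul (by gcongr) (add_le_add hG hGhat)
      (add_nonneg (specNorm_nonneg _) (specNorm_nonneg _)) (by positivity)
  have hfactor : (1 - α * β) / (1 - β) ≤ (1 + α * β) / (1 - β) := by
    gcongr
    nlinarith
  have hΔM := (specNorm_sub_le_of_contraction hα1 hβ0 hβ1 hfixC hfixChat hcontr).trans <|
    mul_le_mul hfactor hgram (specNorm_nonneg _) (div_nonneg (by positivity) hβ.le)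
  calc eucNorm (r - rhat)
      ≤ K₁ / C₁ * (ε * specNorm Sη⁻¹ * eucNorm y +
          (1 + α * β) / (1 - β) * (ε * specNorm Sη⁻¹ * (H + H)) *
            (K₂ / C₂ * (H * specNorm Sη⁻¹ * eucNorm y))) :=
        eucNorm_sub_le_of_mulVec_eq (hGPD.add_posSemidef hB).isUnit
          (hGhatPD.add_posSemidef hBhat).isUnit
          (mulVec_eq_of_fixedPoint hfixC hr) (mulVec_eq_of_fixedPoint hfixChat hrhat)
          ((hGPD.specNorm_inv_add_le hB).trans (specNorm_inv_le_div hK₁ hC₁ hlow))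
          ((hGhatPD.specNorm_inv_add_le hBhat).trans (specNorm_inv_le_div hK₂ hC₂ hlowhat))
          ((eucNorm_sub_transpose_mul_mulVec_le G Ghat Sη⁻¹ y).trans (by gcongr))
          ((eucNorm_transpose_mul_mulVec_le Ghat Sη⁻¹ y).trans (by gcongr)) hΔM
    _ = _ := by field_simp; ring

theorem stmt_12 {p n : ℕ} (G Ghat : Matrix (Fin p) (Fin n) ℝ)
    (Sη : Matrix (Fin p) (Fin p) ℝ) (hSη : Sη.PosDef)
    (Sω : Matrix (Fin n) (Fin n) ℝ) (hSω : Sω.PosDef)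
    (α : ℝ) (hα0 : 0 < α) (hα1 : α ≤ 1) (y : Fin p → ℝ)
    (C Chat : Matrix (Fin n) (Fin n) ℝ) (hC : C.PosDef) (hChat : Chat.PosDef)
    (hfixC : C⁻¹ = Gᵀ * Sη⁻¹ * G + (α ^ 2 • C + Sω)⁻¹)
    (hfixChat : Chat⁻¹ = Ghatᵀ * Sη⁻¹ * Ghat + (α ^ 2 • Chat + Sω)⁻¹)
    (r rhat : Fin n → ℝ)
    (hr : C⁻¹ *ᵥ r = (Gᵀ * Sη⁻¹) *ᵥ y + α • ((α ^ 2 • C + Sω)⁻¹ *ᵥ r))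
    (hrhat : Chat⁻¹ *ᵥ rhat =
      (Ghatᵀ * Sη⁻¹) *ᵥ y + α • ((α ^ 2 • Chat + Sω)⁻¹ *ᵥ rhat))
    (hGPD : (Gᵀ * Sη⁻¹ * G).PosDef) (hGhatPD : (Ghatᵀ * Sη⁻¹ * Ghat).PosDef)
    (ε H : ℝ) (hε : 0 < ε) (hH : 0 < H)
    (hGG : specNorm (G - Ghat) ≤ ε)
    (hG : specNorm G ≤ H) (hGhat : specNorm Ghat ≤ H)
    (C₁ C₂ : ℝ) (hC₁ : 0 < C₁) (hC₂ : 0 < C₂)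
    (hlow : C₁ ≤ specNorm (Gᵀ * Sη⁻¹ * G))
    (hlowhat : C₂ ≤ specNorm (Ghatᵀ * Sη⁻¹ * Ghat))
    (β : ℝ) (hβ0 : 0 ≤ β) (hβ1 : β < 1)
    (hcontr : specNorm ((α ^ 2 • C + Sω)⁻¹ - (α ^ 2 • Chat + Sω)⁻¹) ≤
      β * specNorm (C⁻¹ - Chat⁻¹))
    (K₁ K₂ : ℝ)
    (hK₁ : specNorm (Gᵀ * Sη⁻¹ * G)⁻¹ * specNorm (Gᵀ * Sη⁻¹ * G) ≤ K₁)
    (hK₂ : specNorm (Ghatᵀ * Sη⁻¹ * Ghat)⁻¹ * specNorm (Ghatᵀ * Sη⁻¹ * Ghat) ≤ K₂) :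
    eucNorm (r - rhat) ≤
      K₁ * specNorm Sη⁻¹ * eucNorm y / C₁ *
        (1 + 2 * (1 + α * β) * K₂ * specNorm Sη⁻¹ * H ^ 2 / ((1 - β) * C₂)) * ε :=
  stmt_12_general G Ghat Sη Sω hSω α hα0 hα1 y C Chat hC hChat hfixC hfixChat r rhat hr hrhat hGPD
    hGhatPD ε H hGG hG hGhat C₁ C₂ hC₁ hC₂ hlow hlowhat β hβ0 hβ1 hcontr K₁ K₂ hK₁ hK₂
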